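/- arXiv:1211.0587 — 5 statements merged into one kernel-verified Lean document; each statement's English description precedes it below -/
import Mathlib

section
/- The number of binary temporal partitions satisfies the recurrence |𝒞_0| = 1 and |𝒞_d| = |𝒞_{d−1}|² + 1 for every d ≥ 1 (so |𝒞_1| = 2, |𝒞_2| = 5, |𝒞_3| = 26, |𝒞_4| = 677, |𝒞_5| = 458330). -/
/-- The set `𝒞_d(t)` of binary temporal partitions starting at `t`, represented as
finsets of segments `(a,b)` (each segment identified with the interval `{a,…,b}`). -/
def Cpt : ℕ → ℕ → Finset (Finset (ℕ × ℕ))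
  | 0, t => {{(t, t)}}
  | d + 1, t =>
      insert {(t, t + 2 ^ (d + 1) - 1)}
        ((Cpt d t ×ˢ Cpt d (t + 2 ^ d)).image fun p => p.1 ∪ p.2)

lemma Cpt_bounds : ∀ d t : ℕ, ∀ S ∈ Cpt d t, ∀ p ∈ S,
    t ≤ p.1 ∧ p.1 ≤ p.2 ∧ p.2 ≤ t + 2 ^ d - 1 := by
  intro d
  induction d with
  | zero =>
    intro t S hS p hp
    simp [Cpt] at hS
    subst hS
    simp at hp
    subst hp
    simp
  | succ d ih =>
    intro t S hS p hp
    have h1 : (1:ℕ) ≤ 2 ^ d := Nat.one_le_two_pow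
    simp only [Cpt, Finset.mem_insert, Finset.mem_image, Finset.mem_product] at hS
    rcases hS with rfl | ⟨⟨S₁, S₂⟩, ⟨h₁, h₂⟩, rfl⟩
    · simp at hp
      subst hp
      refine ⟨le_refl _, ?_, le_refl _⟩
      omega
    · simp only [Finset.mem_union] at hp
      rcases hp with hp | hp
      · obtain ⟨ha, hab, hb⟩ := ih t S₁ h₁ p hp
        refine ⟨ha, hab, ?_⟩
        have : (2:ℕ) ^ (d+1) = 2 ^ d + 2 ^ d := by ring
        omega
      · obtain ⟨ha, hab, hb⟩ := ih (t + 2 ^ d) S₂ h₂ p hp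
        have : (2:ℕ) ^ (d+1) = 2 ^ d + 2 ^ d := by ring
        refine ⟨by omega, hab, by omega⟩

lemma Cpt_nonempty : ∀ d t : ℕ, ∀ S ∈ Cpt d t, S.Nonempty := by
  intro d
  induction d with
  | zero =>
    intro t S hS
    simp [Cpt] at hS
    subst hS
    simp
  | succ d ih =>
    intro t S hS
    simp only [Cpt, Finset.mem_insert, Finset.mem_image, Finset.mem_product] at hS
    rcases hS with rfl | ⟨⟨S₁, S₂⟩, ⟨h₁, h₂⟩, rfl⟩
    · simp
    · exact (ih t S₁ h₁).mono Finset.subset_union_left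

/-- The counting sequence. -/
def cseq : ℕ → ℕ
  | 0 => 1
  | d + 1 => (cseq d) ^ 2 + 1

lemma card_Cpt : ∀ d t : ℕ, (Cpt d t).card = cseq d := by
  intro d
  induction d with
  | zero => intro t; simp [Cpt, cseq]
  | succ d ih =>
    intro t
    have h1 : (1:ℕ) ≤ 2 ^ d := Nat.one_le_two_pow
    rw [show Cpt (d+1) t = insert {(t, t + 2 ^ (d + 1) - 1)}
        ((Cpt d t ×ˢ Cpt d (t + 2 ^ d)).image fun p => p.1 ∪ p.2) from rfl]
    have hinj : Set.InjOn (fun p : Finset (ℕ×ℕ) × Finset (ℕ×ℕ) => p.1 ∪ p.2)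
        (Cpt d t ×ˢ Cpt d (t + 2 ^ d) : Finset _) := by
      rintro ⟨S₁, S₂⟩ hS ⟨T₁, T₂⟩ hT hE
      simp only [Finset.coe_product, Set.mem_prod, Finset.mem_coe] at hS hT
      obtain ⟨hS₁, hS₂⟩ := hS
      obtain ⟨hT₁, hT₂⟩ := hT
      simp only at hE
      have key : ∀ (U₁ U₂ : Finset (ℕ×ℕ)), U₁ ∈ Cpt d t → U₂ ∈ Cpt d (t + 2 ^ d) →
          U₁ = (U₁ ∪ U₂).filter (fun p => p.2 < t + 2 ^ d) ∧
          U₂ = (U₁ ∪ U₂).filter (fun p => ¬ p.2 < t + 2 ^ d) := by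
        intro U₁ U₂ h₁ h₂
        constructor
        · ext p
          simp only [Finset.mem_filter, Finset.mem_union]
          constructor
          · intro hp
            obtain ⟨_, _, hb⟩ := Cpt_bounds d t U₁ h₁ p hp
            exact ⟨Or.inl hp, by omega⟩
          · rintro ⟨hp | hp, hlt⟩
            · exact hp
            · obtain ⟨ha, hab, _⟩ := Cpt_bounds d (t + 2 ^ d) U₂ h₂ p hp
              omega
        · ext p
          simp only [Finset.mem_filter, Finset.mem_union]
          constructor
          · intro hp
            obtain ⟨ha, hab, _⟩ := Cpt_bounds d (t + 2 ^ d) U₂ h₂ p hp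
            exact ⟨Or.inr hp, by omega⟩
          · rintro ⟨hp | hp, hlt⟩
            · obtain ⟨_, _, hb⟩ := Cpt_bounds d t U₁ h₁ p hp
              omega
            · exact hp
      obtain ⟨e1, e2⟩ := key S₁ S₂ hS₁ hS₂
      obtain ⟨f1, f2⟩ := key T₁ T₂ hT₁ hT₂
      have hST1 : S₁ = T₁ := by rw [e1, f1, hE]
      have hST2 : S₂ = T₂ := by rw [e2, f2, hE]
      simp only [Prod.mk.injEq]
      exact ⟨hST1, hST2⟩
    have hnot : {(t, t + 2 ^ (d + 1) - 1)} ∉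
        (Cpt d t ×ˢ Cpt d (t + 2 ^ d)).image (fun p => p.1 ∪ p.2) := by
      intro h
      simp only [Finset.mem_image, Finset.mem_product] at h
      obtain ⟨⟨S₁, S₂⟩, ⟨h₁, h₂⟩, hE⟩ := h
      obtain ⟨p, hp⟩ := Cpt_nonempty d (t + 2 ^ d) S₂ h₂
      obtain ⟨ha, _, _⟩ := Cpt_bounds d (t + 2 ^ d) S₂ h₂ p hp
      have : p ∈ S₁ ∪ S₂ := Finset.mem_union_right _ hp
      rw [hE] at this
      rw [Finset.mem_singleton] at this
      subst this
      have ha' : t + 2 ^ d ≤ t := ha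
      omega
    rw [Finset.card_insert_of_notMem hnot, Finset.card_image_of_injOn hinj,
        Finset.card_product, ih t, ih (t + 2 ^ d), cseq]
    ring

/-- The number of binary temporal partitions satisfies `|𝒞_0| = 1` and
`|𝒞_d| = |𝒞_{d-1}|² + 1` for every `d ≥ 1`
(so `|𝒞_1| = 2`, `|𝒞_2| = 5`, `|𝒞_3| = 26`, `|𝒞_4| = 677`, `|𝒞_5| = 458330`). -/
theorem card_binary_temporal_partitions :
    (Cpt 0 1).card = 1 ∧
    (∀ d : ℕ, 1 ≤ d → (Cpt d 1).card = (Cpt (d - 1) 1).card ^ 2 + 1) ∧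
    (Cpt 1 1).card = 2 ∧ (Cpt 2 1).card = 5 ∧ (Cpt 3 1).card = 26 ∧
    (Cpt 4 1).card = 677 ∧ (Cpt 5 1).card = 458330 := by
  refine ⟨by simp [card_Cpt, cseq], ?_, ?_, ?_, ?_, ?_, ?_⟩
  · intro d hd
    obtain ⟨e, rfl⟩ := Nat.exists_eq_add_of_le hd
    simp only [card_Cpt, Nat.add_sub_cancel_left]
    rw [show 1 + e = e + 1 by ring, cseq]
  all_goals simp [card_Cpt, cseq]
end

section
/- (Lemma 1) For any depth d ≥ 1 and any data sequence x_{1:n} ∈ 𝒳^n with n ≤ 2^d, the Partition Tree Weighting mixture satisfies the recursion PTW_d(x_{1:n}) = (1/2)·ρ(x_{1:n}) + (1/2)·PTW_{d−1}(x_{1:k})·PTW_{d−1}(x_{k+1:n}), where k = 2^{d−1}. -/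
/-- `Γ_d(P)`: the number of nodes of depth less than `d` in the binary partition tree
associated with `P ∈ 𝒞_d(t)`, defined by the recursion `Γ_0(P) = 0`,
`Γ_{d+1}({(t, t+2^{d+1}-1)}) = 1` and `Γ_{d+1}(S₁ ∪ S₂) = Γ_d(S₁) + Γ_d(S₂) + 1`. -/
def Gam : ℕ → ℕ → Finset (ℕ × ℕ) → ℕ
  | 0, _, _ => 0
  | d + 1, t, P =>
      if P = {(t, t + 2 ^ (d + 1) - 1)} then 1
      else Gam d t (P.filter fun s => s.2 < t + 2 ^ d)
            + Gam d (t + 2 ^ d) (P.filter fun s => t + 2 ^ d ≤ s.1) + 1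

/-- The substring `x_{a:min(b,n)}` of the (1-based) sequence `x` of length `n`,
treated as a standalone string; it is the empty string when `a > min(b,n)`. -/
def seg {𝒳 : Type*} (x : ℕ → 𝒳) (n a b : ℕ) : List 𝒳 :=
  (List.range (min b n + 1 - a)).map fun i => x (a + i)

/-- `ρ` is a probabilistic data generating source: `ρ(ε) = 1`,
`ρ(x_{1:n}) = ∑_{y ∈ 𝒳} ρ(x_{1:n} y)`, and all values lie in `[0,1]`. -/
def IsSource {𝒳 : Type*} [Fintype 𝒳] (ρ : List 𝒳 → ℝ) : Prop :=
  ρ [] = 1 ∧ (∀ l : List 𝒳, ρ l = ∑ y : 𝒳, ρ (l ++ [y])) ∧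
    ∀ l : List 𝒳, ρ l ∈ Set.Icc (0 : ℝ) 1

/-- The Partition Tree Weighting mixture
`PTW_d(x_{1:n}) = ∑_{P ∈ 𝒞_d} 2^{-Γ_d(P)} ∏_{(a,b) ∈ P} ρ(x_{a:b})` (for `n ≤ 2^d`). -/
noncomputable def PTW {𝒳 : Type*} (ρ : List 𝒳 → ℝ) (d : ℕ) (x : ℕ → 𝒳) (n : ℕ) : ℝ :=
  ∑ P ∈ Cpt d 1, (2 : ℝ) ^ (-(Gam d 1 P : ℤ)) * ∏ s ∈ P, ρ (seg x n s.1 s.2)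

/-!
Every partition in `𝒞_{d+1}(t)` is either the single segment `(t, t + 2^{d+1} - 1)`, of weight
`2^{-1}`, or splits uniquely at `t + 2^d` into a partition of each half, with
`Γ_{d+1}(S₁ ∪ S₂) = Γ_d(S₁) + Γ_d(S₂) + 1`. So the sum defining `PTW_{d+1}` is half the root term
plus half the product of the two half-sums. The right half-sum, over partitions starting at
`1 + 2^d`, becomes `PTW_d` of the shifted sequence after translating segments by `2^d`, and
segments of the left half never reach past `2^d`, so truncating the data there changes nothing.
-/

open Finset

section BinaryPartitions

variable {d t : ℕ} {P S₁ S₂ : Finset (ℕ × ℕ)}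

lemma mem_Cpt_succ :
    P ∈ Cpt (d + 1) t ↔ P = {(t, t + 2 ^ (d + 1) - 1)} ∨
      ∃ S₁ ∈ Cpt d t, ∃ S₂ ∈ Cpt d (t + 2 ^ d), S₁ ∪ S₂ = P := by
  simp [Cpt]
  tauto

lemma nonempty_of_mem_Cpt (hP : P ∈ Cpt d t) : P.Nonempty := by
  induction d generalizing t P with
  | zero => simp_all [Cpt]
  | succ d ih =>
    rcases mem_Cpt_succ.mp hP with rfl | ⟨S₁, h₁, S₂, -, rfl⟩
    · simp
    · exact (ih h₁).mono subset_union_left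

lemma bounds_of_mem_Cpt (hP : P ∈ Cpt d t) {s : ℕ × ℕ} (hs : s ∈ P) :
    t ≤ s.1 ∧ s.1 ≤ s.2 ∧ s.2 < t + 2 ^ d := by
  induction d generalizing t P with
  | zero => simp_all [Cpt]
  | succ d ih =>
    have : 2 ^ (d + 1) = 2 ^ d + 2 ^ d := by ring
    have := d.one_le_two_pow
    rcases mem_Cpt_succ.mp hP with rfl | ⟨S₁, h₁, S₂, h₂, rfl⟩
    · rw [mem_singleton.mp hs]; omega
    · rcases mem_union.mp hs with hs | hs
      · have := ih h₁ hs; omega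
      · have := ih h₂ hs; omega

lemma filter_union_Cpt_left (h₁ : S₁ ∈ Cpt d t) (h₂ : S₂ ∈ Cpt d (t + 2 ^ d)) :
    (S₁ ∪ S₂).filter (fun s => s.2 < t + 2 ^ d) = S₁ := by
  rw [filter_union, filter_true_of_mem fun s hs => (bounds_of_mem_Cpt h₁ hs).2.2,
    filter_false_of_mem fun s hs => by have := bounds_of_mem_Cpt h₂ hs; omega, union_empty]

lemma filter_union_Cpt_right (h₁ : S₁ ∈ Cpt d t) (h₂ : S₂ ∈ Cpt d (t + 2 ^ d)) :
    (S₁ ∪ S₂).filter (fun s => t + 2 ^ d ≤ s.1) = S₂ := by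
  rw [filter_union, filter_false_of_mem fun s hs => by have := bounds_of_mem_Cpt h₁ hs; omega,
    filter_true_of_mem fun s hs => (bounds_of_mem_Cpt h₂ hs).1, empty_union]

lemma disjoint_of_mem_Cpt (h₁ : S₁ ∈ Cpt d t) (h₂ : S₂ ∈ Cpt d (t + 2 ^ d)) :
    Disjoint S₁ S₂ :=
  disjoint_left.mpr fun s hs₁ hs₂ => by
    have := bounds_of_mem_Cpt h₁ hs₁
    have := bounds_of_mem_Cpt h₂ hs₂
    omega

lemma union_ne_singleton_of_mem_Cpt (h₁ : S₁ ∈ Cpt d t) :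
    S₁ ∪ S₂ ≠ {(t, t + 2 ^ (d + 1) - 1)} := by
  intro h
  obtain ⟨s, hs⟩ := nonempty_of_mem_Cpt h₁
  have hs' : s ∈ S₁ ∪ S₂ := mem_union_left _ hs
  rw [h, mem_singleton] at hs'
  have := bounds_of_mem_Cpt h₁ hs
  have : 2 ^ (d + 1) = 2 ^ d + 2 ^ d := by ring
  have := d.one_le_two_pow
  subst hs'
  omega

lemma Gam_union (h₁ : S₁ ∈ Cpt d t) (h₂ : S₂ ∈ Cpt d (t + 2 ^ d)) :
    Gam (d + 1) t (S₁ ∪ S₂) = Gam d t S₁ + Gam d (t + 2 ^ d) S₂ + 1 := by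
  rw [Gam, if_neg (union_ne_singleton_of_mem_Cpt h₁), filter_union_Cpt_left h₁ h₂,
    filter_union_Cpt_right h₁ h₂]

lemma Cpt_succ_eq_insert :
    Cpt (d + 1) t = insert {(t, t + 2 ^ (d + 1) - 1)}
      ((Cpt d t ×ˢ Cpt d (t + 2 ^ d)).image fun p => p.1 ∪ p.2) := by
  rw [Cpt]

lemma singleton_notMem_image_union :
    {(t, t + 2 ^ (d + 1) - 1)} ∉ (Cpt d t ×ˢ Cpt d (t + 2 ^ d)).image fun p => p.1 ∪ p.2 := by
  simp only [mem_image, mem_product, not_exists, not_and]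
  exact fun p hp => union_ne_singleton_of_mem_Cpt hp.1

lemma injOn_union_Cpt :
    Set.InjOn (fun p : Finset (ℕ × ℕ) × Finset (ℕ × ℕ) => p.1 ∪ p.2)
      (Cpt d t ×ˢ Cpt d (t + 2 ^ d) : Finset _) := by
  rintro ⟨A, B⟩ hAB ⟨C, D⟩ hCD h
  simp only [coe_product, Set.mem_prod, mem_coe] at hAB hCD h
  refine Prod.ext ?_ ?_
  · rw [← filter_union_Cpt_left hAB.1 hAB.2, h, filter_union_Cpt_left hCD.1 hCD.2]
  · rw [← filter_union_Cpt_right hAB.1 hAB.2, h, filter_union_Cpt_right hCD.1 hCD.2]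

end BinaryPartitions

section Translation

def shiftSeg (k : ℕ) : ℕ × ℕ ↪ ℕ × ℕ :=
  (addRightEmbedding k).prodMap (addRightEmbedding k)

@[simp]
lemma shiftSeg_apply (k : ℕ) (s : ℕ × ℕ) : shiftSeg k s = (s.1 + k, s.2 + k) := rfl

lemma Cpt_add (k d t : ℕ) : Cpt d (t + k) = (Cpt d t).image (map (shiftSeg k)) := by
  induction d generalizing t with
  | zero => simp [Cpt]
  | succ d ih =>
    have := (d + 1).one_le_two_pow
    rw [Cpt_succ_eq_insert, Cpt_succ_eq_insert, image_insert, map_singleton, shiftSeg_apply,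
      show t + k + 2 ^ d = t + 2 ^ d + k by omega, ih, ih, ← prodMap_image_product, image_image,
      image_image]
    congr 2
    · exact Prod.ext rfl (by dsimp only; omega)
    · funext p
      exact (map_union _ _).symm

lemma Gam_add {k d t : ℕ} {P : Finset (ℕ × ℕ)} (hP : P ∈ Cpt d t) :
    Gam d (t + k) (P.map (shiftSeg k)) = Gam d t P := by
  induction d generalizing t P with
  | zero => rfl
  | succ d ih =>
    rcases mem_Cpt_succ.mp hP with rfl | ⟨S₁, h₁, S₂, h₂, rfl⟩
    · have := (d + 1).one_le_two_pow
      rw [Gam, Gam, if_pos rfl, if_pos (by rw [map_singleton, shiftSeg_apply]; congr 2; omega)]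
    · have h₁' : S₁.map (shiftSeg k) ∈ Cpt d (t + k) := Cpt_add k d t ▸ mem_image_of_mem _ h₁
      have h₂' : S₂.map (shiftSeg k) ∈ Cpt d (t + k + 2 ^ d) := by
        rw [show t + k + 2 ^ d = t + 2 ^ d + k by omega, Cpt_add]
        exact mem_image_of_mem _ h₂
      rw [map_union, Gam_union h₁' h₂', Gam_union h₁ h₂, ih h₁,
        show t + k + 2 ^ d = t + 2 ^ d + k by omega, ih h₂]

end Translation

section Mixture

variable {𝒳 : Type*}

lemma seg_min (x : ℕ → 𝒳) {m n a b : ℕ} (hb : b ≤ m) : seg x (min m n) a b = seg x n a b := by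
  rw [seg, seg, show min b (min m n) = min b n by omega]

lemma seg_of_le (x : ℕ → 𝒳) {n a b : ℕ} (hn : n ≤ b) : seg x n a b = seg x n a n := by
  rw [seg, seg, min_eq_right hn, min_self]

lemma seg_add (x : ℕ → 𝒳) {n k a b : ℕ} (ha : 1 ≤ a) :
    seg x n (a + k) (b + k) = seg (fun i => x (i + k)) (n - k) a b := by
  rw [seg, seg, show min (b + k) n + 1 - (a + k) = min b (n - k) + 1 - a by omega]
  exact List.map_congr_left fun i _ => by rw [add_right_comm]

variable (ρ : List 𝒳 → ℝ)

noncomputable def ptwFrom (d t : ℕ) (x : ℕ → 𝒳) (n : ℕ) : ℝ :=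
  ∑ P ∈ Cpt d t, (2 : ℝ) ^ (-(Gam d t P : ℤ)) * ∏ s ∈ P, ρ (seg x n s.1 s.2)

lemma PTW_eq_ptwFrom (d : ℕ) (x : ℕ → 𝒳) (n : ℕ) : PTW ρ d x n = ptwFrom ρ d 1 x n := rfl

lemma ptwFrom_succ (d t : ℕ) (x : ℕ → 𝒳) (n : ℕ) :
    ptwFrom ρ (d + 1) t x n = 1 / 2 * ρ (seg x n t (t + 2 ^ (d + 1) - 1))
      + 1 / 2 * (ptwFrom ρ d t x n * ptwFrom ρ d (t + 2 ^ d) x n) := by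
  rw [ptwFrom, Cpt_succ_eq_insert, sum_insert singleton_notMem_image_union,
    sum_image injOn_union_Cpt, sum_product, ptwFrom, ptwFrom, sum_mul_sum, mul_sum]
  congr 1
  · rw [Gam, if_pos rfl, prod_singleton]
    norm_num
  · refine sum_congr rfl fun S₁ h₁ => ?_
    rw [mul_sum]
    refine sum_congr rfl fun S₂ h₂ => ?_
    rw [Gam_union h₁ h₂, prod_union (disjoint_of_mem_Cpt h₁ h₂)]
    simp only [zpow_neg, zpow_natCast, pow_add, pow_one, mul_inv]
    ring

lemma ptwFrom_min {d t m : ℕ} (x : ℕ → 𝒳) (n : ℕ) (hm : t + 2 ^ d ≤ m + 1) :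
    ptwFrom ρ d t x (min m n) = ptwFrom ρ d t x n := by
  refine sum_congr rfl fun P hP => congrArg _ <| prod_congr rfl fun s hs => ?_
  have := bounds_of_mem_Cpt hP hs
  rw [seg_min x (by omega)]

lemma ptwFrom_add {t : ℕ} (d k : ℕ) (x : ℕ → 𝒳) (n : ℕ) (ht : 1 ≤ t) :
    ptwFrom ρ d (t + k) x n = ptwFrom ρ d t (fun i => x (i + k)) (n - k) := by
  rw [ptwFrom, Cpt_add, sum_image fun _ _ _ _ h => map_injective (shiftSeg k) h]
  refine sum_congr rfl fun P hP => ?_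
  rw [Gam_add hP, prod_map]
  refine congrArg _ <| prod_congr rfl fun s hs => ?_
  rw [shiftSeg_apply, seg_add x (ht.trans (bounds_of_mem_Cpt hP hs).1)]

end Mixture

theorem ptw_recursion_general {𝒳 : Type*}
    (ρ : List 𝒳 → ℝ)
    (d : ℕ) (hd : 1 ≤ d) (n : ℕ) (hn : n ≤ 2 ^ d) (x : ℕ → 𝒳) :
    PTW ρ d x n =
      1 / 2 * ρ (seg x n 1 n)
        + 1 / 2 * PTW ρ (d - 1) x (min (2 ^ (d - 1)) n)
            * PTW ρ (d - 1) (fun i => x (i + 2 ^ (d - 1))) (n - 2 ^ (d - 1)) := by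
  obtain ⟨d, rfl⟩ : ∃ e, d = e + 1 := ⟨d - 1, by omega⟩
  rw [Nat.add_sub_cancel, PTW_eq_ptwFrom, PTW_eq_ptwFrom, PTW_eq_ptwFrom, ptwFrom_succ,
    ptwFrom_min ρ x n (by omega), ptwFrom_add ρ d _ _ n le_rfl,
    seg_of_le x (show n ≤ 1 + 2 ^ (d + 1) - 1 by omega), mul_assoc]

/-- **Lemma 1.** For any depth `d ≥ 1` and any data sequence
`x_{1:n} ∈ 𝒳ⁿ` with `n ≤ 2^d`, the PTW mixture satisfies the recursion
`PTW_d(x_{1:n}) = ½·ρ(x_{1:n}) + ½·PTW_{d-1}(x_{1:k})·PTW_{d-1}(x_{k+1:n})`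
where `k = 2^{d-1}`. -/
theorem ptw_recursion {𝒳 : Type*} [Fintype 𝒳] [Nonempty 𝒳]
    (ρ : List 𝒳 → ℝ) (hρ : IsSource ρ)
    (d : ℕ) (hd : 1 ≤ d) (n : ℕ) (hn : n ≤ 2 ^ d) (x : ℕ → 𝒳) :
    PTW ρ d x n =
      1 / 2 * ρ (seg x n 1 n)
        + 1 / 2 * PTW ρ (d - 1) x (min (2 ^ (d - 1)) n)
            * PTW ρ (d - 1) (fun i => x (i + 2 ^ (d - 1))) (n - 2 ^ (d - 1)) :=
  ptw_recursion_general ρ d hd n hn x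
end

section
/- (Proposition 1) For all n ∈ ℕ with d = ⌈log₂ n⌉, for all x_{1:n} ∈ 𝒳^n and every binary temporal partition P ∈ 𝒞_d such that ρ(x_{a:b}) > 0 for every (a,b) ∈ P, one has −log₂ PTW_d(x_{1:n}) ≤ Γ_d(P) + ∑_{(a,b)∈P} (−log₂ ρ(x_{a:b})). -/
/-- **Proposition 1.** For all `n ∈ ℕ` with `d = ⌈log₂ n⌉`, for all
`x_{1:n} ∈ 𝒳ⁿ` and every binary temporal partition `P ∈ 𝒞_d` such that
`ρ(x_{a:b}) > 0` for every `(a,b) ∈ P`, one has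
`-log₂ PTW_d(x_{1:n}) ≤ Γ_d(P) + ∑_{(a,b) ∈ P} (-log₂ ρ(x_{a:b}))`. -/
theorem ptw_weighting_bound {𝒳 : Type*} [Fintype 𝒳] [Nonempty 𝒳]
    (ρ : List 𝒳 → ℝ) (hρ : IsSource ρ)
    (n : ℕ) (x : ℕ → 𝒳) (P : Finset (ℕ × ℕ)) (hP : P ∈ Cpt (Nat.clog 2 n) 1)
    (hpos : ∀ s ∈ P, 0 < ρ (seg x n s.1 s.2)) :
    -Real.logb 2 (PTW ρ (Nat.clog 2 n) x n) ≤
      (Gam (Nat.clog 2 n) 1 P : ℝ) + ∑ s ∈ P, -Real.logb 2 (ρ (seg x n s.1 s.2)) := by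

  obtain ⟨h0, hsum, hIcc⟩ := hρ
  set d := Nat.clog 2 n with hd
  have hterm : (2:ℝ)^(-(Gam d 1 P : ℤ)) * ∏ s ∈ P, ρ (seg x n s.1 s.2) ≤ PTW ρ d x n := by
    apply Finset.single_le_sum (f := fun Q => (2:ℝ)^(-(Gam d 1 Q : ℤ)) * ∏ s ∈ Q, ρ (seg x n s.1 s.2)) ?_ hP
    intro Q _
    exact mul_nonneg (zpow_nonneg (by norm_num) _)
      (Finset.prod_nonneg fun s _ => (hIcc _).1)
  have hprodpos : 0 < ∏ s ∈ P, ρ (seg x n s.1 s.2) := Finset.prod_pos hpos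
  have htpos : 0 < (2:ℝ)^(-(Gam d 1 P : ℤ)) * ∏ s ∈ P, ρ (seg x n s.1 s.2) :=
    mul_pos (zpow_pos (by norm_num) _) hprodpos
  have h1 : -Real.logb 2 (PTW ρ d x n)
      ≤ -Real.logb 2 ((2:ℝ)^(-(Gam d 1 P : ℤ)) * ∏ s ∈ P, ρ (seg x n s.1 s.2)) := by
    have := Real.logb_le_logb_of_le (b := 2) (by norm_num) htpos hterm
    linarith
  refine h1.trans_eq ?_
  rw [Real.logb_mul (ne_of_gt (zpow_pos (by norm_num) _)) (ne_of_gt hprodpos),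
    ← Real.rpow_intCast, Real.logb_rpow (by norm_num) (by norm_num), Real.logb_prod _ _ (fun s hs => ne_of_gt (hpos s hs))]
  rw [Finset.sum_neg_distrib]
  push_cast
  ring
end

section
/- (Lemma 2) For every n ∈ ℕ with n ≥ 1 and every temporal partition P ∈ 𝒯_n, setting d = ⌈log₂ n⌉, there exists a binary temporal partition P′ ∈ 𝒞_d such that P′ is a refinement of P and |P′| ≤ |P|·(⌈log₂ n⌉ + 1). -/
/-- `P` is a temporal partition of `{1,…,n}`: a set of pairwise non-overlapping
segments `(a,b)` with `a ≤ b`, whose union is exactly `{1,…,n}`. -/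
def IsTPartition (n : ℕ) (P : Finset (ℕ × ℕ)) : Prop :=
  (∀ s ∈ P, s.1 ≤ s.2) ∧
  (∀ s ∈ P, ∀ t ∈ P, s ≠ t → ∀ i, s.1 ≤ i → i ≤ s.2 → ¬(t.1 ≤ i ∧ i ≤ t.2)) ∧
  (∀ i : ℕ, (1 ≤ i ∧ i ≤ n) ↔ ∃ s ∈ P, s.1 ≤ i ∧ i ≤ s.2)

/-- `C(P)`: the set of change points of `P`, i.e. the left endpoints of its segments
other than `1`. A partition `P'` is a refinement of `P` if `C(P) ⊆ C(P')`. -/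
def changePts (P : Finset (ℕ × ℕ)) : Finset ℕ :=
  (P.image Prod.fst).erase 1

/-- Binary partition of `[t, t+2^d-1]` splitting whenever `S` has a point strictly
inside the interval. -/
def Bpart : ℕ → ℕ → Finset ℕ → Finset (ℕ × ℕ)
  | 0, t, _ => {(t, t)}
  | d + 1, t, S =>
      if (S ∩ Finset.Icc (t + 1) (t + 2 ^ (d + 1) - 1)).Nonempty then
        Bpart d t S ∪ Bpart d (t + 2 ^ d) S
      else {(t, t + 2 ^ (d + 1) - 1)}

lemma Bpart_mem (d t : ℕ) (S : Finset ℕ) : Bpart d t S ∈ Cpt d t := by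
  induction d generalizing t with
  | zero => simp [Bpart, Cpt]
  | succ d ih =>
    simp only [Bpart, Cpt]
    split
    · refine Finset.mem_insert_of_mem ?_
      exact Finset.mem_image.2 ⟨(Bpart d t S, Bpart d (t + 2 ^ d) S),
        Finset.mem_product.2 ⟨ih t, ih (t + 2 ^ d)⟩, rfl⟩
    · exact Finset.mem_insert_self _ _

lemma Bpart_start (d t : ℕ) (S : Finset ℕ) : ∃ b, (t, b) ∈ Bpart d t S := by
  induction d generalizing t with
  | zero => exact ⟨t, by simp [Bpart]⟩
  | succ d ih =>
    simp only [Bpart]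
    split
    · obtain ⟨b, hb⟩ := ih t
      exact ⟨b, Finset.mem_union_left _ hb⟩
    · exact ⟨t + 2 ^ (d + 1) - 1, by simp⟩

lemma Bpart_chg (d t : ℕ) (S : Finset ℕ) :
    ∀ c ∈ S, t + 1 ≤ c → c ≤ t + 2 ^ d - 1 → ∃ b, (c, b) ∈ Bpart d t S := by
  induction d generalizing t with
  | zero => intro c _ h1 h2; simp at h2; omega
  | succ d ih =>
    intro c hc h1 h2
    have hk : 1 ≤ 2 ^ d := Nat.one_le_two_pow
    have h2p : (2 : ℕ) ^ (d + 1) = 2 * 2 ^ d := by rw [pow_succ]; ring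
    simp only [Bpart]
    rw [if_pos ⟨c, Finset.mem_inter.2 ⟨hc, Finset.mem_Icc.2 ⟨h1, h2⟩⟩⟩]
    rcases lt_trichotomy c (t + 2 ^ d) with h | h | h
    · obtain ⟨b, hb⟩ := ih t c hc h1 (by omega)
      exact ⟨b, Finset.mem_union_left _ hb⟩
    · obtain ⟨b, hb⟩ := Bpart_start d (t + 2 ^ d) S
      exact ⟨b, Finset.mem_union_right _ (h ▸ hb)⟩
    · obtain ⟨b, hb⟩ := ih (t + 2 ^ d) c hc (by omega) (by omega)
      exact ⟨b, Finset.mem_union_right _ hb⟩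

lemma Bpart_card (d t : ℕ) (S : Finset ℕ) :
    (Bpart d t S).card ≤ 1 + (S ∩ Finset.Icc (t + 1) (t + 2 ^ d - 1)).card * d := by
  induction d generalizing t with
  | zero => simp [Bpart]
  | succ d ih =>
    have hk : 1 ≤ 2 ^ d := Nat.one_le_two_pow
    have h2p : (2 : ℕ) ^ (d + 1) = 2 * 2 ^ d := by rw [pow_succ]; ring
    simp only [Bpart]
    split
    · next h =>
      set m1 := (S ∩ Finset.Icc (t + 1) (t + 2 ^ d - 1)).card with hm1
      set m2 := (S ∩ Finset.Icc (t + 2 ^ d + 1) (t + 2 ^ d + 2 ^ d - 1)).card with hm2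
      set m := (S ∩ Finset.Icc (t + 1) (t + 2 ^ (d + 1) - 1)).card with hm
      have hmpos : 1 ≤ m := Finset.card_pos.2 h
      have hsum : m1 + m2 ≤ m := by
        rw [hm1, hm2, hm]
        rw [← Finset.card_union_of_disjoint]
        · apply Finset.card_le_card
          intro a ha
          rcases Finset.mem_union.1 ha with ha | ha <;>
          · obtain ⟨haS, hab⟩ := Finset.mem_inter.1 ha
            rw [Finset.mem_Icc] at hab
            exact Finset.mem_inter.2 ⟨haS, Finset.mem_Icc.2 (by omega)⟩
        · apply Finset.disjoint_left.2
          intro a ha hb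
          obtain ⟨_, ha2⟩ := Finset.mem_inter.1 ha
          obtain ⟨_, hb2⟩ := Finset.mem_inter.1 hb
          rw [Finset.mem_Icc] at ha2 hb2
          omega
      calc (Bpart d t S ∪ Bpart d (t + 2 ^ d) S).card
          ≤ (Bpart d t S).card + (Bpart d (t + 2 ^ d) S).card := Finset.card_union_le _ _
        _ ≤ (1 + m1 * d) + (1 + m2 * d) := Nat.add_le_add (ih t) (ih (t + 2 ^ d))
        _ ≤ 1 + m * (d + 1) := by nlinarith
    · simp

/-- **Lemma 2.** For every `n ≥ 1` and every temporal partition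
`P ∈ 𝒯_n`, setting `d = ⌈log₂ n⌉`, there exists a binary temporal partition
`P' ∈ 𝒞_d` such that `P'` is a refinement of `P` and `|P'| ≤ |P|·(⌈log₂ n⌉ + 1)`. -/
theorem binary_refinement_exists (n : ℕ) (hn : 1 ≤ n)
    (P : Finset (ℕ × ℕ)) (hP : IsTPartition n P) :
    ∃ P' ∈ Cpt (Nat.clog 2 n) 1,
      changePts P ⊆ changePts P' ∧ P'.card ≤ P.card * (Nat.clog 2 n + 1) := by
  obtain ⟨h1, h2, h3⟩ := hP
  set d := Nat.clog 2 n with hd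
  set S := changePts P with hS
  have hn2 : n ≤ 2 ^ d := Nat.le_pow_clog (by norm_num) n
  refine ⟨Bpart d 1 S, Bpart_mem d 1 S, ?_, ?_⟩
  · intro c hc
    have hcne : c ≠ 1 := Finset.ne_of_mem_erase hc
    obtain ⟨s, hsP, hsc⟩ := Finset.mem_image.1 (Finset.mem_of_mem_erase hc)
    have hcn : 1 ≤ c ∧ c ≤ n :=
      (h3 c).2 ⟨s, hsP, le_of_eq hsc, hsc ▸ h1 s hsP⟩
    obtain ⟨b, hb⟩ := Bpart_chg d 1 S c hc (by omega)
      (by have := Nat.one_le_two_pow (n := d); omega)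
    exact Finset.mem_erase.2 ⟨hcne, Finset.mem_image.2 ⟨(c, b), hb, rfl⟩⟩
  · -- the segment containing 1 has left endpoint 1
    obtain ⟨s, hsP, hs1, hs2⟩ := (h3 1).1 ⟨le_refl 1, hn⟩
    have hs1' : s.1 = 1 := by
      rcases Nat.lt_or_ge s.1 1 with h | h
      · exfalso
        have h0 : s.1 ≤ 0 := by omega
        have := (h3 0).2 ⟨s, hsP, h0, le_trans (by omega) hs2⟩
        omega
      · omega
    have hmem1 : (1 : ℕ) ∈ P.image Prod.fst :=
      Finset.mem_image.2 ⟨s, hsP, hs1'⟩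
    have hPpos : 1 ≤ P.card := Finset.card_pos.2 ⟨s, hsP⟩
    have hScard : S.card ≤ P.card - 1 := by
      rw [hS, changePts]
      have := Finset.card_erase_of_mem hmem1
      have := Finset.card_image_le (s := P) (f := Prod.fst)
      omega
    have hmcard : (S ∩ Finset.Icc (1 + 1) (1 + 2 ^ d - 1)).card ≤ P.card - 1 :=
      le_trans (Finset.card_le_card (Finset.inter_subset_left)) hScard
    calc (Bpart d 1 S).card
        ≤ 1 + (S ∩ Finset.Icc (1 + 1) (1 + 2 ^ d - 1)).card * d := Bpart_card d 1 S
      _ ≤ 1 + (P.card - 1) * d := by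
          exact Nat.add_le_add_left (Nat.mul_le_mul_right d hmcard) 1
      _ ≤ P.card * (d + 1) := by
          have : (P.card - 1) * d ≤ P.card * d := Nat.mul_le_mul_right d (by omega)
          nlinarith
end

section
/- (Theorem 1) Let n ≥ 1, d = ⌈log₂ n⌉, and let μ be a piecewise stationary source on 𝒳 with temporal partition P ∈ 𝒯_n and segment sources μ^1, μ^2, …. Let ρ be a base source and let g : ℕ → ℝ be non-negative, monotonically non-decreasing, and concave with g(0) = 0. Assume x_{1:n} ∈ 𝒳^n is such that μ(x_{1:n}) > 0, all relevant values of ρ are positive, and for every segment (c,e) with a ≤ c ≤ e ≤ min(b,n) for some (a,b) ∈ P, the conditional redundancy satisfies log₂ μ^{f(a)}(x_{c:e} | x_{a:c−1}) − log₂ ρ(x_{c:e}) ≤ g(e − c + 1), where μ^{f(a)}(x_{c:e} | x_{a:c−1}) := μ^{f(a)}(x_{a:e}) / μ^{f(a)}(x_{a:c−1}) and f(i) is the index of the segment of P containing i. Then there exists a refinement P′ ∈ 𝒞_d of P with Γ_d(P′) ≤ 2·|P|·(⌈log₂ n⌉ + 1) such that log₂ μ(x_{1:n}) − log₂ PTW_d(x_{1:n})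 ≤ Γ_d(P′) + |P|·g(⌈ n / (|P|·(⌈log₂ n⌉ + 1)) ⌉)·(⌈log₂ n⌉ + 1). -/
/-!
Keep a single term of the PTW mixture. Splitting a dyadic block of `{1,…,2^d}` exactly when a
change point of `P` lies strictly inside it gives a binary partition `B ∈ 𝒞_d` in which every
change point starts a segment. A change point causes at most one split per level, so `B` has at
most `|P|(d+1)` segments and `Γ_d(B) ≤ 2|P|(d+1)`. As `B` refines `P`, the probability of each
segment of `P` telescopes into conditional probabilities of the segments of `B` inside it, each
exceeding its `ρ`-probability by at most `g(length)`. The lengths add up to at most `n`, so by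
concavity the redundancies add up to at most `m·g(⌈n/m⌉)` with `m = |P|(d+1)`, and
`PTW_d ≥ 2^{-Γ_d(B)} ∏_{s ∈ B} ρ(x_s)` accounts for the `Γ_d(B)` term.
-/

open Finset Real

section BinaryRefine

variable (C : Finset ℕ)

/-- The coarsest partition in `𝒞_d(t)` in which every point of `C` inside the block starts a
segment. -/
def binaryRefine : ℕ → ℕ → Finset (ℕ × ℕ)
  | 0, t => {(t, t)}
  | d + 1, t =>
      if ∃ c ∈ C, t < c ∧ c < t + 2 ^ (d + 1) then
        binaryRefine d t ∪ binaryRefine d (t + 2 ^ d)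
      else {(t, t + 2 ^ (d + 1) - 1)}

theorem binaryRefine_mem_Cpt (d t : ℕ) : binaryRefine C d t ∈ Cpt d t := by
  induction d generalizing t with
  | zero => simp [binaryRefine, Cpt]
  | succ d ih =>
    rw [binaryRefine, Cpt]
    split
    · exact mem_insert_of_mem
        (mem_image.2 ⟨(_, _), mem_product.2 ⟨ih t, ih (t + 2 ^ d)⟩, rfl⟩)
    · exact mem_insert_self _ _

variable {C}

theorem bounds_of_mem_binaryRefine {d t : ℕ} {s : ℕ × ℕ} (hs : s ∈ binaryRefine C d t) :
    t ≤ s.1 ∧ s.1 ≤ s.2 ∧ s.2 < t + 2 ^ d := by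
  induction d generalizing t with
  | zero => simp_all [binaryRefine]
  | succ d ih =>
    have := Nat.one_le_two_pow (n := d)
    rw [binaryRefine] at hs
    split at hs
    · rcases mem_union.1 hs with h | h <;> · have := ih h; omega
    · rw [mem_singleton] at hs
      subst hs
      dsimp only
      omega

theorem eq_of_mem_binaryRefine {d t : ℕ} {s s' : ℕ × ℕ} (hs : s ∈ binaryRefine C d t)
    (hs' : s' ∈ binaryRefine C d t) (h₁ : s.1 ≤ s'.1) (h₂ : s'.1 ≤ s.2) : s' = s := by
  induction d generalizing t with
  | zero => simp only [binaryRefine, mem_singleton] at hs hs'; rw [hs, hs']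
  | succ d ih =>
    by_cases hsplit : ∃ c ∈ C, t < c ∧ c < t + 2 ^ (d + 1)
    · rw [binaryRefine, if_pos hsplit] at hs hs'
      rcases mem_union.1 hs with hl | hr <;> rcases mem_union.1 hs' with hl' | hr'
      · exact ih hl hl'
      · have := bounds_of_mem_binaryRefine hl; have := bounds_of_mem_binaryRefine hr'; omega
      · have := bounds_of_mem_binaryRefine hr; have := bounds_of_mem_binaryRefine hl'; omega
      · exact ih hr hr'
    · rw [binaryRefine, if_neg hsplit, mem_singleton] at hs hs'
      rw [hs, hs']

variable (C) in
theorem exists_mem_binaryRefine_fst_eq_self (d t : ℕ) : ∃ e, (t, e) ∈ binaryRefine C d t := by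
  induction d generalizing t with
  | zero => exact ⟨t, by simp [binaryRefine]⟩
  | succ d ih =>
    rw [binaryRefine]
    split
    · obtain ⟨e, he⟩ := ih t
      exact ⟨e, mem_union_left _ he⟩
    · exact ⟨_, mem_singleton_self _⟩

theorem exists_mem_binaryRefine_fst_eq_of_mem {d t c : ℕ} (hc : c ∈ C) (htc : t < c)
    (hct : c < t + 2 ^ d) : ∃ e, (c, e) ∈ binaryRefine C d t := by
  induction d generalizing t with
  | zero => simp at hct; omega
  | succ d ih =>
    rw [binaryRefine, if_pos ⟨c, hc, htc, hct⟩]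
    rcases lt_trichotomy c (t + 2 ^ d) with h | rfl | h
    · obtain ⟨e, he⟩ := ih htc h
      exact ⟨e, mem_union_left _ he⟩
    · obtain ⟨e, he⟩ := exists_mem_binaryRefine_fst_eq_self C d (t + 2 ^ d)
      exact ⟨e, mem_union_right _ he⟩
    · obtain ⟨e, he⟩ := ih h (by omega)
      exact ⟨e, mem_union_right _ he⟩

theorem exists_mem_binaryRefine_fst_eq_snd_add_one {d t : ℕ} {s : ℕ × ℕ}
    (hs : s ∈ binaryRefine C d t) (hlt : s.2 + 1 < t + 2 ^ d) :
    ∃ e, (s.2 + 1, e) ∈ binaryRefine C d t := by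
  induction d generalizing t with
  | zero => have := bounds_of_mem_binaryRefine hs; simp at this hlt; omega
  | succ d ih =>
    by_cases hsplit : ∃ c ∈ C, t < c ∧ c < t + 2 ^ (d + 1)
    · rw [binaryRefine, if_pos hsplit] at hs ⊢
      rcases mem_union.1 hs with h | h
      · rcases lt_or_ge (s.2 + 1) (t + 2 ^ d) with hin | hout
        · obtain ⟨e, he⟩ := ih h hin
          exact ⟨e, mem_union_left _ he⟩
        · have hnext : s.2 + 1 = t + 2 ^ d := by have := bounds_of_mem_binaryRefine h; omega
          obtain ⟨e, he⟩ := exists_mem_binaryRefine_fst_eq_self C d (t + 2 ^ d)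
          rw [hnext]
          exact ⟨e, mem_union_right _ he⟩
      · obtain ⟨e, he⟩ := ih h (by omega)
        exact ⟨e, mem_union_right _ he⟩
    · rw [binaryRefine, if_neg hsplit, mem_singleton] at hs
      subst hs
      have := Nat.one_le_two_pow (n := d + 1)
      dsimp only at hlt
      omega

variable (C) in
theorem card_filter_add_card_filter_le (d t : ℕ) :
    #{c ∈ C | t < c ∧ c < t + 2 ^ d} + #{c ∈ C | t + 2 ^ d < c ∧ c < t + 2 ^ d + 2 ^ d}
      ≤ #{c ∈ C | t < c ∧ c < t + 2 ^ (d + 1)} := by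
  rw [← card_union_of_disjoint (disjoint_filter.2 fun _ _ h₁ h₂ => by omega)]
  refine card_le_card fun c hc => ?_
  simp only [mem_union, mem_filter] at hc ⊢
  rcases hc with ⟨hc, h⟩ | ⟨hc, h⟩ <;> exact ⟨hc, by omega⟩

theorem Gam_succ_union {d t : ℕ} {B₁ B₂ : Finset (ℕ × ℕ)}
    (h₁ : ∀ s ∈ B₁, s.1 ≤ s.2 ∧ s.2 < t + 2 ^ d) (h₂ : ∀ s ∈ B₂, t + 2 ^ d ≤ s.1 ∧ s.1 ≤ s.2)
    (hne : B₁.Nonempty) :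
    Gam (d + 1) t (B₁ ∪ B₂) = Gam d t B₁ + Gam d (t + 2 ^ d) B₂ + 1 := by
  have hne_single : B₁ ∪ B₂ ≠ {(t, t + 2 ^ (d + 1) - 1)} := by
    obtain ⟨s, hs⟩ := hne
    intro h
    have hs' := mem_singleton.1 (h ▸ mem_union_left B₂ hs)
    have := h₁ s hs
    rw [hs'] at this
    dsimp only at this
    omega
  rw [Gam, if_neg hne_single, filter_union, filter_union,
    filter_true_of_mem fun s hs => (h₁ s hs).2,
    filter_false_of_mem fun s hs => by have := h₂ s hs; omega,
    filter_false_of_mem fun s hs => by have := h₁ s hs; omega,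
    filter_true_of_mem fun s hs => (h₂ s hs).1, union_empty, empty_union]

variable (C)

theorem Gam_binaryRefine_le (d t : ℕ) :
    Gam d t (binaryRefine C d t) ≤ 2 * #{c ∈ C | t < c ∧ c < t + 2 ^ d} * (d + 1) + 1 := by
  induction d generalizing t with
  | zero => simp [Gam]
  | succ d ih =>
    by_cases hsplit : ∃ c ∈ C, t < c ∧ c < t + 2 ^ (d + 1)
    · have hk : 1 ≤ #{c ∈ C | t < c ∧ c < t + 2 ^ (d + 1)} :=
        card_pos.2 (filter_nonempty_iff.2 hsplit)
      obtain ⟨e, he⟩ := exists_mem_binaryRefine_fst_eq_self C d t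
      rw [binaryRefine, if_pos hsplit,
        Gam_succ_union (fun s hs => (bounds_of_mem_binaryRefine hs).2)
          (fun s hs => ⟨(bounds_of_mem_binaryRefine hs).1, (bounds_of_mem_binaryRefine hs).2.1⟩)
          ⟨_, he⟩]
      nlinarith [ih t, ih (t + 2 ^ d), card_filter_add_card_filter_le C d t]
    · rw [binaryRefine, if_neg hsplit, Gam, if_pos rfl]
      omega

theorem card_binaryRefine_le (d t : ℕ) :
    #(binaryRefine C d t) ≤ #{c ∈ C | t < c ∧ c < t + 2 ^ d} * (d + 1) + 1 := by
  induction d generalizing t with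
  | zero => simp [binaryRefine]
  | succ d ih =>
    by_cases hsplit : ∃ c ∈ C, t < c ∧ c < t + 2 ^ (d + 1)
    · have hk : 1 ≤ #{c ∈ C | t < c ∧ c < t + 2 ^ (d + 1)} :=
        card_pos.2 (filter_nonempty_iff.2 hsplit)
      rw [binaryRefine, if_pos hsplit]
      nlinarith [card_union_le (binaryRefine C d t) (binaryRefine C d (t + 2 ^ d)), ih t,
        ih (t + 2 ^ d), card_filter_add_card_filter_le C d t]
    · rw [binaryRefine, if_neg hsplit]
      simp

end BinaryRefine

section Segments

variable {𝒳 : Type*} (x : ℕ → 𝒳) (n : ℕ)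

theorem length_seg (a b : ℕ) : (seg x n a b).length = min b n + 1 - a := by
  simp [seg]

theorem seg_eq_nil {a b : ℕ} (h : min b n < a) : seg x n a b = [] := by
  rw [← List.length_eq_zero_iff, length_seg]
  omega

theorem seg_congr_right {a b b' : ℕ} (h : min b n = min b' n) : seg x n a b = seg x n a b' := by
  rw [seg, seg, h]

theorem seg_prefix_seg {a j b : ℕ} (h : j ≤ b) : seg x n a j <+: seg x n a b := by
  refine List.IsPrefix.map _ (List.prefix_iff_eq_take.2 ?_)
  rw [List.take_range, List.length_range]
  congr 1
  omega

theorem sum_length_seg_le {B : Finset (ℕ × ℕ)} (hB : ∀ s ∈ B, 1 ≤ s.1)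
    (hBeq : ∀ s ∈ B, ∀ s' ∈ B, s.1 ≤ s'.1 → s'.1 ≤ s.2 → s' = s) :
    ∑ s ∈ B, (seg x n s.1 s.2).length ≤ n := by
  have hdisj : (B : Set (ℕ × ℕ)).PairwiseDisjoint fun s => Icc s.1 (min s.2 n) := by
    intro s hs s' hs' hne
    refine disjoint_left.2 fun i hi hi' => ?_
    rw [mem_Icc] at hi hi'
    rcases le_total s.1 s'.1 with h | h
    · exact hne (hBeq s hs s' hs' h (by omega)).symm
    · exact hne (hBeq s' hs' s hs h (by omega))
  calc ∑ s ∈ B, (seg x n s.1 s.2).length = #(B.biUnion fun s => Icc s.1 (min s.2 n)) := by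
        simp only [card_biUnion hdisj, Nat.card_Icc, length_seg]
    _ ≤ #(Icc 1 n) := card_le_card fun i hi => by
        obtain ⟨s, hs, hi⟩ := mem_biUnion.1 hi
        have := hB s hs
        simp only [mem_Icc] at hi ⊢
        omega
    _ = n := by simp

end Segments

namespace IsSource

variable {𝒳 : Type*} [Fintype 𝒳] {μ : List 𝒳 → ℝ} (hμ : IsSource μ)
include hμ

theorem nonneg (l : List 𝒳) : 0 ≤ μ l := (hμ.2.2 l).1

theorem apply_append_singleton_le (l : List 𝒳) (y : 𝒳) : μ (l ++ [y]) ≤ μ l := by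
  rw [hμ.2.1 l]
  exact single_le_sum (fun z _ => hμ.nonneg (l ++ [z])) (mem_univ y)

theorem antitone_of_prefix {l₁ l₂ : List 𝒳} (h : l₁ <+: l₂) : μ l₂ ≤ μ l₁ := by
  obtain ⟨t, rfl⟩ := h
  induction t using List.reverseRecOn with
  | nil => simp
  | append_singleton t y ih =>
    rw [← List.append_assoc]
    exact (hμ.apply_append_singleton_le _ y).trans ih

end IsSource

section Telescoping

variable {𝒳 : Type*} [Fintype 𝒳] (x : ℕ → 𝒳) (n : ℕ) {B : Finset (ℕ × ℕ)}
  {μ ρ : List 𝒳 → ℝ} {g : ℝ → ℝ} {a b : ℕ}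

theorem filter_fst_mem_Icc_eq_insert
    (hBeq : ∀ s ∈ B, ∀ s' ∈ B, s.1 ≤ s'.1 → s'.1 ≤ s.2 → s' = s)
    {c e e' : ℕ} (he : (c, e) ∈ B) (hcb : c ≤ b) (hce' : c ≤ e') (he'e : e' ≤ e) :
    {s ∈ B | c ≤ s.1 ∧ s.1 ≤ b} = insert (c, e) {s ∈ B | e' + 1 ≤ s.1 ∧ s.1 ≤ b} := by
  ext s
  simp only [mem_filter, mem_insert]
  constructor
  · rintro ⟨hs, hcs, hsb⟩
    rcases le_or_gt s.1 e' with h | h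
    · exact Or.inl (hBeq _ he s hs hcs (h.trans he'e))
    · exact Or.inr ⟨hs, h, hsb⟩
  · rintro (rfl | ⟨hs, h, hsb⟩)
    · exact ⟨he, le_rfl, hcb⟩
    · exact ⟨hs, by omega, hsb⟩

/-- The `μ`-probability of `x_{c:b}` given `x_{a:c-1}` splits along the segments of `B` covering
`{c,…,b}`, each factor being the conditional probability of one segment. -/
theorem logb_sub_logb_seg_le_sum (hB : ∀ s ∈ B, s.1 ≤ s.2)
    (hBeq : ∀ s ∈ B, ∀ s' ∈ B, s.1 ≤ s'.1 → s'.1 ≤ s.2 → s' = s)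
    (hBnext : ∀ s ∈ B, s.2 + 1 ≤ b → ∃ e, (s.2 + 1, e) ∈ B)
    (hBend : ∀ s ∈ B, s.1 ≤ b → min s.2 n ≤ b)
    (hμ : IsSource μ) (hbn : b ≤ n) (hμpos : 0 < μ (seg x n a b))
    (hred : ∀ c e : ℕ, a ≤ c → c ≤ e → e ≤ b →
      logb 2 (μ (seg x n a e) / μ (seg x n a (c - 1))) - logb 2 (ρ (seg x n c e))
        ≤ g ((e : ℝ) - c + 1))
    {c : ℕ} (hac : a ≤ c) (hcb : c ≤ b + 1) (hc : c = b + 1 ∨ ∃ e, (c, e) ∈ B) :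
    logb 2 (μ (seg x n a b)) - logb 2 (μ (seg x n a (c - 1)))
      ≤ ∑ s ∈ B with c ≤ s.1 ∧ s.1 ≤ b,
          (logb 2 (ρ (seg x n s.1 s.2)) + g (seg x n s.1 s.2).length) := by
  induction hk : b + 1 - c using Nat.strong_induction_on generalizing c with
  | _ k ih =>
  by_cases hcb' : c = b + 1
  · subst hcb'
    rw [filter_false_of_mem fun s _ h => by omega, sum_empty, Nat.add_sub_cancel, sub_self]
  obtain ⟨e, he⟩ := hc.resolve_left hcb'
  have hpos : ∀ j ≤ b, 0 < μ (seg x n a j) := fun j hj =>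
    hμpos.trans_le (hμ.antitone_of_prefix (seg_prefix_seg x n hj))
  -- `e'` is where the segment `(c, e)` really ends, as `x` stops at `n`
  set e' := min e n with he'
  have hce : c ≤ e := hB _ he
  have he'b : e' ≤ b := hBend _ he (by omega)
  have hnext : e' + 1 = b + 1 ∨ ∃ f, (e' + 1, f) ∈ B := by
    rcases eq_or_lt_of_le he'b with h | h
    · exact Or.inl (by rw [h])
    · have : e' = e := by omega
      exact Or.inr (this ▸ hBnext _ he (by omega))
  have hrest := ih (b + 1 - (e' + 1)) (by omega) (by omega) (by omega) hnext rfl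
  rw [Nat.add_sub_cancel] at hrest
  have hfirst := hred c e' hac (by omega) he'b
  rw [logb_div (hpos e' he'b).ne' (hpos (c - 1) (by omega)).ne',
    seg_congr_right x n (a := c) (by omega : min e' n = min e n)] at hfirst
  have hlen : ((e' : ℝ) - c + 1) = ((seg x n c e).length : ℝ) := by
    rw [length_seg, ← he', Nat.cast_sub (by omega)]
    push_cast
    ring
  rw [hlen] at hfirst
  rw [filter_fst_mem_Icc_eq_insert hBeq he (by omega) (by omega) (min_le_left e n),
    sum_insert fun h => by simp at h; omega]
  dsimp only
  linarith

end Telescoping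

namespace IsTPartition

variable {n : ℕ} {P : Finset (ℕ × ℕ)} (hP : IsTPartition n P)
include hP

theorem bounds {p : ℕ × ℕ} (hp : p ∈ P) : 1 ≤ p.1 ∧ p.1 ≤ p.2 ∧ p.2 ≤ n :=
  ⟨((hP.2.2 p.1).2 ⟨p, hp, le_rfl, hP.1 p hp⟩).1, hP.1 p hp,
    ((hP.2.2 p.2).2 ⟨p, hp, hP.1 p hp, le_rfl⟩).2⟩

theorem eq_of_mem {p q : ℕ × ℕ} (hp : p ∈ P) (hq : q ∈ P) {i : ℕ} (hpi : p.1 ≤ i ∧ i ≤ p.2)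
    (hqi : q.1 ≤ i ∧ i ≤ q.2) : p = q := by
  by_contra hne
  exact hP.2.1 p hp q hq hne i hpi.1 hpi.2 hqi

theorem snd_add_one_mem_changePts {p : ℕ × ℕ} (hp : p ∈ P) (hpn : p.2 < n) :
    p.2 + 1 ∈ changePts P := by
  have hpb := hP.bounds hp
  obtain ⟨q, hq, hqi⟩ := (hP.2.2 (p.2 + 1)).1 ⟨by omega, hpn⟩
  have hq1 : q.1 = p.2 + 1 := by
    by_contra hne
    have := hP.eq_of_mem hp hq (i := p.2) ⟨hpb.2.1, le_rfl⟩ ⟨by omega, by omega⟩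
    subst this
    omega
  exact mem_erase.2 ⟨by omega, mem_image.2 ⟨q, hq, hq1⟩⟩

theorem card_changePts_lt (hn : 1 ≤ n) : #(changePts P) < #P := by
  obtain ⟨p, hp, hp1⟩ := (hP.2.2 1).1 ⟨le_rfl, hn⟩
  have hp1 : p.1 = 1 := le_antisymm hp1.1 (hP.bounds hp).1
  exact (card_erase_lt_of_mem (mem_image.2 ⟨p, hp, hp1⟩)).trans_le card_image_le

theorem sum_sum_filter_eq_sum {M : Type*} [AddCommMonoid M] {B : Finset (ℕ × ℕ)}
    {f : ℕ × ℕ → M} (hB : ∀ s ∈ B, 1 ≤ s.1) (hf : ∀ s ∈ B, n < s.1 → f s = 0) :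
    ∑ p ∈ P, ∑ s ∈ B with p.1 ≤ s.1 ∧ s.1 ≤ p.2, f s = ∑ s ∈ B, f s := by
  simp_rw [sum_filter]
  rw [sum_comm]
  refine sum_congr rfl fun s hs => ?_
  by_cases hsn : s.1 ≤ n
  · obtain ⟨p, hp, hps⟩ := (hP.2.2 s.1).1 ⟨hB s hs, hsn⟩
    rw [sum_eq_single_of_mem p hp fun q hq hqp =>
      if_neg fun hqs => hqp (hP.eq_of_mem hq hp hqs hps), if_pos hps]
  · rw [hf s hs (by omega)]
    exact sum_eq_zero fun p hp => if_neg fun hps => by have := hP.bounds hp; omega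

variable {d : ℕ} (hnd : n ≤ 2 ^ d)
include hnd

theorem exists_mem_binaryRefine_fst_eq {p : ℕ × ℕ} (hp : p ∈ P) :
    ∃ e, (p.1, e) ∈ binaryRefine (changePts P) d 1 := by
  have hpb := hP.bounds hp
  by_cases hp1 : p.1 = 1
  · rw [hp1]
    exact exists_mem_binaryRefine_fst_eq_self _ d 1
  · exact exists_mem_binaryRefine_fst_eq_of_mem
      (mem_erase.2 ⟨hp1, mem_image_of_mem _ hp⟩) (by omega) (by omega)

theorem changePts_subset_changePts_binaryRefine :
    changePts P ⊆ changePts (binaryRefine (changePts P) d 1) := by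
  intro c hc
  obtain ⟨hc1, hcP⟩ := mem_erase.1 hc
  obtain ⟨p, hp, rfl⟩ := mem_image.1 hcP
  obtain ⟨e, he⟩ := hP.exists_mem_binaryRefine_fst_eq hnd hp
  exact mem_erase.2 ⟨hc1, mem_image.2 ⟨_, he, rfl⟩⟩

theorem min_snd_le_of_mem_binaryRefine {p s : ℕ × ℕ} (hp : p ∈ P)
    (hs : s ∈ binaryRefine (changePts P) d 1) (hsp : s.1 ≤ p.2) : min s.2 n ≤ p.2 := by
  by_contra! hlt
  have hpb := hP.bounds hp
  obtain ⟨e, he⟩ := exists_mem_binaryRefine_fst_eq_of_mem (d := d) (t := 1)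
    (hP.snd_add_one_mem_changePts hp (by omega)) (by omega) (by omega)
  have := eq_of_mem_binaryRefine hs he (by dsimp only; omega) (by dsimp only; omega)
  subst this
  exact absurd hsp (by simp)

theorem logb_prod_le_sum_binaryRefine {𝒳 : Type*} [Fintype 𝒳] {x : ℕ → 𝒳}
    {μseg : ℕ × ℕ → List 𝒳 → ℝ} {ρ : List 𝒳 → ℝ} {g : ℝ → ℝ}
    (hμ : ∀ p ∈ P, IsSource (μseg p)) (hμpos : 0 < ∏ p ∈ P, μseg p (seg x n p.1 p.2))
    (hρ : ρ [] = 1) (hg0 : g 0 = 0)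
    (hred : ∀ a b c e : ℕ, (a, b) ∈ P → a ≤ c → c ≤ e → e ≤ min b n →
      logb 2 (μseg (a, b) (seg x n a e) / μseg (a, b) (seg x n a (c - 1)))
        - logb 2 (ρ (seg x n c e)) ≤ g ((e : ℝ) - c + 1)) :
    logb 2 (∏ p ∈ P, μseg p (seg x n p.1 p.2))
      ≤ ∑ s ∈ binaryRefine (changePts P) d 1,
          (logb 2 (ρ (seg x n s.1 s.2)) + g (seg x n s.1 s.2).length) := by
  have hpos : ∀ p ∈ P, 0 < μseg p (seg x n p.1 p.2) := fun p hp =>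
    ((hμ p hp).nonneg _).lt_of_ne fun h => hμpos.ne' (prod_eq_zero hp h.symm)
  have hBpos : ∀ s ∈ binaryRefine (changePts P) d 1, 1 ≤ s.1 := fun s hs =>
    (bounds_of_mem_binaryRefine hs).1
  rw [logb_prod _ _ fun p hp => (hpos p hp).ne', ← hP.sum_sum_filter_eq_sum hBpos fun s _ hs => by
    rw [seg_eq_nil x n (by omega), hρ, logb_one, List.length_nil, Nat.cast_zero, hg0, add_zero]]
  refine sum_le_sum fun p hp => ?_
  have hpb := hP.bounds hp
  have htele := logb_sub_logb_seg_le_sum x n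
    (fun s hs => (bounds_of_mem_binaryRefine hs).2.1) (fun s hs s' hs' => eq_of_mem_binaryRefine hs hs')
    (fun s hs hsb => exists_mem_binaryRefine_fst_eq_snd_add_one hs (by omega))
    (fun s hs => hP.min_snd_le_of_mem_binaryRefine hnd hp hs) (hμ p hp) hpb.2.2 (hpos p hp)
    (fun c e hc hce heb => hred p.1 p.2 c e hp hc hce (by omega)) le_rfl (by omega)
    (Or.inr (hP.exists_mem_binaryRefine_fst_eq hnd hp))
  rwa [seg_eq_nil x n (by omega : min (p.1 - 1) n < p.1), (hμ p hp).1, logb_one, sub_zero] at htele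

end IsTPartition

theorem neg_Gam_add_sum_logb_le_logb_PTW {𝒳 : Type*} {ρ : List 𝒳 → ℝ} (hρ : ∀ l, 0 ≤ ρ l)
    {d n : ℕ} {x : ℕ → 𝒳} {Q : Finset (ℕ × ℕ)} (hQ : Q ∈ Cpt d 1)
    (hQpos : ∀ s ∈ Q, 0 < ρ (seg x n s.1 s.2)) :
    -(Gam d 1 Q : ℝ) + ∑ s ∈ Q, logb 2 (ρ (seg x n s.1 s.2)) ≤ logb 2 (PTW ρ d x n) := by
  have hprod : 0 < ∏ s ∈ Q, ρ (seg x n s.1 s.2) := prod_pos hQpos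
  have hterm : (2 : ℝ) ^ (-(Gam d 1 Q : ℤ)) * ∏ s ∈ Q, ρ (seg x n s.1 s.2) ≤ PTW ρ d x n :=
    single_le_sum (f := fun R => (2 : ℝ) ^ (-(Gam d 1 R : ℤ)) * ∏ s ∈ R, ρ (seg x n s.1 s.2))
      (fun R _ => mul_nonneg (by positivity) (prod_nonneg fun s _ => hρ _)) hQ
  calc -(Gam d 1 Q : ℝ) + ∑ s ∈ Q, logb 2 (ρ (seg x n s.1 s.2))
      = logb 2 ((2 : ℝ) ^ (-(Gam d 1 Q : ℤ)) * ∏ s ∈ Q, ρ (seg x n s.1 s.2)) := by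
        rw [logb_mul (by positivity) hprod.ne', logb_prod _ _ fun s hs => (hQpos s hs).ne',
          ← rpow_intCast, logb_rpow two_pos (by norm_num)]
        push_cast
        ring
    _ ≤ logb 2 (PTW ρ d x n) := logb_le_logb_of_le one_lt_two (by positivity) hterm

namespace ConcaveOn

variable {g : ℝ → ℝ} (hg : ConcaveOn ℝ (Set.Ici 0) g) (hg0 : g 0 = 0)
include hg hg0

theorem mul_le_map_mul {c y : ℝ} (hc0 : 0 ≤ c) (hc1 : c ≤ 1) (hy : 0 ≤ y) :
    c * g y ≤ g (c * y) := by
  simpa [hg0] using hg.2 hy Set.self_mem_Ici hc0 (sub_nonneg.2 hc1) (add_sub_cancel c 1)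

theorem sum_le_mul_map_sum_div {ι : Type*} {s : Finset ι} {p : ι → ℝ} (hp : ∀ i ∈ s, 0 ≤ p i)
    {m : ℕ} (hm : #s ≤ m) : ∑ i ∈ s, g (p i) ≤ m * g ((∑ i ∈ s, p i) / m) := by
  rcases s.eq_empty_or_nonempty with rfl | hs
  · simp [hg0]
  set k : ℝ := ((#s : ℕ) : ℝ)
  have hk : 0 < k := Nat.cast_pos.2 hs.card_pos
  have hkm : k ≤ m := Nat.cast_le.2 hm
  have hm0 : (0 : ℝ) < m := hk.trans_le hkm
  have hS : 0 ≤ ∑ i ∈ s, p i := sum_nonneg hp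
  have hjensen : k⁻¹ * ∑ i ∈ s, g (p i) ≤ g (k⁻¹ * ∑ i ∈ s, p i) := by
    simpa [← mul_sum] using hg.le_map_sum (t := s) (w := fun _ => k⁻¹) (p := p)
      (fun _ _ => by positivity) (by simp [k, hk.ne']) hp
  calc ∑ i ∈ s, g (p i) = m * (k / m * (k⁻¹ * ∑ i ∈ s, g (p i))) := by
        field_simp
    _ ≤ m * (k / m * g (k⁻¹ * ∑ i ∈ s, p i)) := by gcongr
    _ ≤ m * g (k / m * (k⁻¹ * ∑ i ∈ s, p i)) := by
        gcongr
        exact hg.mul_le_map_mul hg0 (by positivity) (div_le_one_of_le₀ hkm (by positivity))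
          (by positivity)
    _ = m * g ((∑ i ∈ s, p i) / m) := by
        congr 2
        field_simp

theorem sum_le_mul_map_ceilDiv (hgm : MonotoneOn g (Set.Ici 0)) {ι : Type*} {s : Finset ι}
    {len : ι → ℕ} {N m : ℕ} (hm : #s ≤ m) (hN : ∑ i ∈ s, len i ≤ N) :
    ∑ i ∈ s, g (len i) ≤ m * g ((N ⌈/⌉ m : ℕ) : ℝ) := by
  rcases Nat.eq_zero_or_pos m with rfl | hm0
  · simp [card_eq_zero.1 (Nat.le_zero.1 hm)]
  have hdiv : (∑ i ∈ s, (len i : ℝ)) / m ≤ (N ⌈/⌉ m : ℕ) := by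
    rw [div_le_iff₀ (by positivity)]
    exact_mod_cast hN.trans ((le_smul_ceilDiv hm0).trans_eq (smul_eq_mul _ _ |>.trans (mul_comm _ _)))
  calc ∑ i ∈ s, g (len i) ≤ m * g ((∑ i ∈ s, (len i : ℝ)) / m) :=
        hg.sum_le_mul_map_sum_div hg0 (fun i _ => Nat.cast_nonneg _) hm
    _ ≤ m * g ((N ⌈/⌉ m : ℕ) : ℝ) := by
        gcongr
        exact hgm (Set.mem_Ici.2 (by positivity)) (Set.mem_Ici.2 (Nat.cast_nonneg _)) hdiv

end ConcaveOn

theorem ptw_redundancy_general {𝒳 : Type*} [Fintype 𝒳]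
    (n : ℕ) (hn : 1 ≤ n) (x : ℕ → 𝒳)
    (P : Finset (ℕ × ℕ)) (hP : IsTPartition n P)
    (μseg : ℕ × ℕ → List 𝒳 → ℝ) (hμ : ∀ s ∈ P, IsSource (μseg s))
    (hμpos : 0 < ∏ s ∈ P, μseg s (seg x n s.1 s.2))
    (ρ : List 𝒳 → ℝ) (hρ : IsSource ρ)
    (hρpos : ∀ a b : ℕ, 0 < ρ (seg x n a b))
    (g : ℝ → ℝ)
    (hg0 : g 0 = 0)
    (hgmono : MonotoneOn g (Set.Ici (0 : ℝ)))
    (hgconc : ConcaveOn ℝ (Set.Ici (0 : ℝ)) g)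
    (hred : ∀ a b c e : ℕ, (a, b) ∈ P → a ≤ c → c ≤ e → e ≤ min b n →
      Real.logb 2 (μseg (a, b) (seg x n a e) / μseg (a, b) (seg x n a (c - 1)))
          - Real.logb 2 (ρ (seg x n c e))
        ≤ g ((e : ℝ) - c + 1)) :
    ∃ P' ∈ Cpt (Nat.clog 2 n) 1,
      changePts P ⊆ changePts P' ∧
      Gam (Nat.clog 2 n) 1 P' ≤ 2 * P.card * (Nat.clog 2 n + 1) ∧
      Real.logb 2 (∏ s ∈ P, μseg s (seg x n s.1 s.2))
          - Real.logb 2 (PTW ρ (Nat.clog 2 n) x n)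
        ≤ (Gam (Nat.clog 2 n) 1 P' : ℝ)
            + (P.card : ℝ)
              * g (((n + P.card * (Nat.clog 2 n + 1) - 1)
                      / (P.card * (Nat.clog 2 n + 1)) : ℕ) : ℝ)
              * (Nat.clog 2 n + 1) := by
  set d := Nat.clog 2 n
  set B := binaryRefine (changePts P) d 1
  have hnd : n ≤ 2 ^ d := Nat.le_pow_clog one_lt_two n
  have hC : #{c ∈ changePts P | 1 < c ∧ c < 1 + 2 ^ d} < #P :=
    (card_filter_le _ _).trans_lt (hP.card_changePts_lt hn)
  have hBmem : B ∈ Cpt d 1 := binaryRefine_mem_Cpt _ d 1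
  refine ⟨B, hBmem, hP.changePts_subset_changePts_binaryRefine hnd, ?_, ?_⟩
  · nlinarith [Gam_binaryRefine_le (changePts P) d 1]
  have hcard : #B ≤ #P * (d + 1) := by nlinarith [card_binaryRefine_le (changePts P) d 1]
  have hμB := hP.logb_prod_le_sum_binaryRefine hnd hμ hμpos hρ.1 hg0 hred
  have hPTW := neg_Gam_add_sum_logb_le_logb_PTW hρ.nonneg hBmem fun s _ => hρpos s.1 s.2
  have hg := hgconc.sum_le_mul_map_ceilDiv hg0 hgmono hcard
    (sum_length_seg_le x n (fun s hs => (bounds_of_mem_binaryRefine hs).1)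
      fun s hs s' hs' => eq_of_mem_binaryRefine hs hs')
  rw [sum_add_distrib] at hμB
  rw [← Nat.ceilDiv_eq_add_pred_div]
  push_cast at hg ⊢
  linarith

/-- **Theorem 1.** Let `n ≥ 1`, `d = ⌈log₂ n⌉`, and let `μ` be a
piecewise stationary source with temporal partition `P ∈ 𝒯_n`, where segment
`(a,b) ∈ P` generates data according to the source `μseg (a,b)`
(so `μ(x_{1:n}) = ∏_{(a,b) ∈ P} μ^{f(a)}(x_{a:b})`).  Let `ρ` be a base source and
`g : ℝ → ℝ` be non-negative, monotonically non-decreasing and concave on `[0,∞)`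
with `g(0) = 0`.  Assume `μ(x_{1:n}) > 0`, all relevant values of `ρ` are positive,
and for every sub-segment `(c,e)` with `a ≤ c ≤ e ≤ min(b,n)` of a segment
`(a,b) ∈ P` the conditional redundancy satisfies
`log₂ μ^{f(a)}(x_{c:e} | x_{a:c-1}) - log₂ ρ(x_{c:e}) ≤ g(e - c + 1)`, where
`μ^{f(a)}(x_{c:e} | x_{a:c-1}) = μ^{f(a)}(x_{a:e}) / μ^{f(a)}(x_{a:c-1})`.
Then there exists a refinement `P' ∈ 𝒞_d` of `P` with
`Γ_d(P') ≤ 2·|P|·(⌈log₂ n⌉ + 1)` such that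
`log₂ μ(x_{1:n}) - log₂ PTW_d(x_{1:n}) ≤
  Γ_d(P') + |P|·g(⌈n / (|P|·(⌈log₂ n⌉ + 1))⌉)·(⌈log₂ n⌉ + 1)`. -/
theorem ptw_redundancy {𝒳 : Type*} [Fintype 𝒳] [Nonempty 𝒳]
    (n : ℕ) (hn : 1 ≤ n) (x : ℕ → 𝒳)
    (P : Finset (ℕ × ℕ)) (hP : IsTPartition n P)
    (μseg : ℕ × ℕ → List 𝒳 → ℝ) (hμ : ∀ s ∈ P, IsSource (μseg s))
    (hμpos : 0 < ∏ s ∈ P, μseg s (seg x n s.1 s.2))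
    (ρ : List 𝒳 → ℝ) (hρ : IsSource ρ)
    (hρpos : ∀ a b : ℕ, 0 < ρ (seg x n a b))
    (g : ℝ → ℝ)
    (hg0 : g 0 = 0)
    (hgnonneg : ∀ y ∈ Set.Ici (0 : ℝ), 0 ≤ g y)
    (hgmono : MonotoneOn g (Set.Ici (0 : ℝ)))
    (hgconc : ConcaveOn ℝ (Set.Ici (0 : ℝ)) g)
    (hred : ∀ a b c e : ℕ, (a, b) ∈ P → a ≤ c → c ≤ e → e ≤ min b n →
      Real.logb 2 (μseg (a, b) (seg x n a e) / μseg (a, b) (seg x n a (c - 1)))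
          - Real.logb 2 (ρ (seg x n c e))
        ≤ g ((e : ℝ) - c + 1)) :
    ∃ P' ∈ Cpt (Nat.clog 2 n) 1,
      changePts P ⊆ changePts P' ∧
      Gam (Nat.clog 2 n) 1 P' ≤ 2 * P.card * (Nat.clog 2 n + 1) ∧
      Real.logb 2 (∏ s ∈ P, μseg s (seg x n s.1 s.2))
          - Real.logb 2 (PTW ρ (Nat.clog 2 n) x n)
        ≤ (Gam (Nat.clog 2 n) 1 P' : ℝ)
            + (P.card : ℝ)
              * g (((n + P.card * (Nat.clog 2 n + 1) - 1)
                      / (P.card * (Nat.clog 2 n + 1)) : ℕ) : ℝ)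
              * (Nat.clog 2 n + 1) :=
  ptw_redundancy_general n hn x P hP μseg hμ hμpos ρ hρ hρpos g hg0 hgmono hgconc hred
end
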